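/- If a 4-gon z₁,z₂,z₃,z₄ ∈ ℍ is maximal (no 4-gon with the same sidelengths has strictly larger signed area), then the four points are either cocyclic or collinear. -/

import Mathlib

/-!
Fix the sidelengths and let the diagonal `t = ⟨z₁, z₃⟩` vary. A triangle in `ℍ` has area at most
that of its positively oriented copy, `2 arctan (√G / (p + q + r + 1))`, where `p, q, r` are the
products of its vertices and `G = 1 + 2pqr - p² - q² - r²` is their Gram determinant. Gluing the
positively oriented copies of `z₁z₂z₃` and `z₁z₃z₄` along the diagonal gives a competitor, so in a
maximal quadrilateral both triangles are positively oriented and `t` maximises the total area as a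
function of the diagonal. A maximum where one triangle degenerates is impossible, because that
triangle's area grows like the square root of the change in `t`. At an interior maximum the
derivative vanishes, and by an explicit determinant identity this says that the `4 × 4` determinant
with rows `(zₖ, 1)` vanishes. So the four points lie in one affine plane, which contains the origin
(collinear) or not (cocyclic).
-/

open Real Finset

noncomputable section

/-- Points of `ℝ³`. -/
abbrev V3 : Type := Fin 3 → ℝ

/-- The pseudo-Euclidean scalar product `⟨x,y⟩ = x₀y₀ − x₁y₁ − x₂y₂`. -/
def pscal (x y : V3) : ℝ := x 0 * y 0 - x 1 * y 1 - x 2 * y 2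

/-- The hyperboloid model `ℍ` of the hyperbolic plane. -/
def Hyp : Set V3 := {x | pscal x x = 1 ∧ 0 < x 0}

/-- Inverse hyperbolic cosine. -/
def arcoshR (x : ℝ) : ℝ := Real.log (x + Real.sqrt (x ^ 2 - 1))

/-- Hyperbolic distance `d(a,b) = arcosh ⟨a,b⟩`. -/
def dH (a b : V3) : ℝ := arcoshR (pscal a b)

/-- Determinant of the 3×3 matrix with columns `a`, `b`, `c`. -/
def det3 (a b c : V3) : ℝ :=
  a 0 * (b 1 * c 2 - b 2 * c 1) - b 0 * (a 1 * c 2 - a 2 * c 1) + c 0 * (a 1 * b 2 - a 2 * b 1)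

/-- `S_ab = sinh(d(a,b)/2)`. -/
def SS (a b : V3) : ℝ := Real.sinh (dH a b / 2)

/-- Signed area of the triangle `a b c`. -/
def triArea (a b c : V3) : ℝ :=
  2 * Real.arctan (det3 a b c / (pscal a b + pscal b c + pscal c a + 1))

/-- Signed area of the `n`-gon with vertices `z 1, …, z n`. -/
def polyArea (n : ℕ) (z : ℕ → V3) : ℝ :=
  ∑ k ∈ Finset.Ico 2 n, triArea (z 1) (z k) (z (k + 1))

/-- Cyclic successor on `{1, …, n}`. -/
def nxt (n k : ℕ) : ℕ := k % n + 1

/-- Oriented convexity of the `n`-gon `z 1, …, z n`. -/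
def OrientedConvex (n : ℕ) (z : ℕ → V3) : Prop :=
  ∀ k ∈ Finset.Icc 1 n, ∀ j ∈ Finset.Icc 1 n,
    j ≠ k → j ≠ nxt n k → 0 < det3 (z k) (z (nxt n k)) (z j)

/-- A set of points lies in a common 2-dimensional linear subspace of `ℝ³`. -/
def Collin (s : Set V3) : Prop :=
  ∃ W : Submodule ℝ V3, Module.finrank ℝ W = 2 ∧ ∀ x ∈ s, x ∈ W

/-- A set of points lies in a common affine plane of `ℝ³` not containing the origin. -/
def Cocyc (s : Set V3) : Prop :=
  ∃ u : V3, ∃ p : ℝ, u ≠ 0 ∧ p ≠ 0 ∧ ∀ x ∈ s, pscal u x = p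

open Filter Topology

lemma pscal_comm (x y : V3) : pscal x y = pscal y x := by
  unfold pscal; ring

lemma one_le_pscal {x y : V3} (hx : x ∈ Hyp) (hy : y ∈ Hyp) : 1 ≤ pscal x y := by
  obtain ⟨hx1, hx0⟩ := hx
  obtain ⟨hy1, hy0⟩ := hy
  unfold pscal at *
  nlinarith [sq_nonneg (x 1 - y 1), sq_nonneg (x 2 - y 2), sq_nonneg (x 1 * y 2 - x 2 * y 1),
    mul_pos hx0 hy0, sq_nonneg (x 0 * y 0 + 1 + x 1 * y 1 + x 2 * y 2),
    sq_nonneg (x 0 * y 0 - 1 - x 1 * y 1 - x 2 * y 2)]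

lemma eq_of_pscal_eq_one {x y : V3} (hx : x ∈ Hyp) (hy : y ∈ Hyp) (h : pscal x y = 1) :
    x = y := by
  obtain ⟨hx1, hx0⟩ := hx
  obtain ⟨hy1, hy0⟩ := hy
  unfold pscal at *
  have h1 : x 1 = y 1 := by
    nlinarith [sq_nonneg (x 1 - y 1), sq_nonneg (x 2 - y 2), sq_nonneg (x 1 * y 2 - x 2 * y 1),
      mul_pos hx0 hy0]
  have h2 : x 2 = y 2 := by
    nlinarith [sq_nonneg (x 1 - y 1), sq_nonneg (x 2 - y 2), sq_nonneg (x 1 * y 2 - x 2 * y 1),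
      mul_pos hx0 hy0]
  have h0 : x 0 = y 0 := by nlinarith
  funext i; fin_cases i <;> assumption

lemma one_lt_pscal_of_dH_pos {x y : V3} (hx : x ∈ Hyp) (hy : y ∈ Hyp) (h : 0 < dH x y) :
    1 < pscal x y := by
  refine (one_le_pscal hx hy).lt_of_ne fun h1 => h.ne' ?_
  rw [dH, ← h1]
  exact Real.arcosh_zero

def pscalLeft (u : V3) : Module.Dual ℝ V3 where
  toFun := pscal u
  map_add' x y := by simp only [pscal, Pi.add_apply]; ring
  map_smul' r x := by simp only [pscal, Pi.smul_apply, smul_eq_mul, RingHom.id_apply]; ring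

lemma pscalLeft_ne_zero {u : V3} (hu : u ≠ 0) : pscalLeft u ≠ 0 := by
  refine fun h => hu (funext fun i => ?_)
  have := LinearMap.congr_fun h (Pi.single i 1)
  fin_cases i <;> simpa [pscalLeft, pscal] using this

lemma collin_of_pscal_eq_zero {s : Set V3} {u : V3} (hu : u ≠ 0)
    (h : ∀ x ∈ s, pscal u x = 0) : Collin s := by
  refine ⟨LinearMap.ker (pscalLeft u), ?_, fun x hx => LinearMap.mem_ker.mpr (h x hx)⟩
  have := Module.Dual.finrank_ker_add_one_of_ne_zero (pscalLeft_ne_zero hu)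
  simp only [Module.finrank_fin_fun] at this
  omega

lemma cocyc_or_collin_of_pscal_eq {s : Set V3} {u : V3} {p : ℝ} (hu : u ≠ 0)
    (h : ∀ x ∈ s, pscal u x = p) : Cocyc s ∨ Collin s := by
  rcases eq_or_ne p 0 with rfl | hp
  · exact Or.inr (collin_of_pscal_eq_zero hu h)
  · exact Or.inl ⟨u, p, hu, hp, h⟩

-- up to sign, the determinant of the `4 × 4` matrix with rows `(xᵢ, 1)`
def coplanarDet (x₁ x₂ x₃ x₄ : V3) : ℝ :=
  det3 x₂ x₃ x₄ - det3 x₁ x₃ x₄ + det3 x₁ x₂ x₄ - det3 x₁ x₂ x₃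

lemma exists_pscal_eq_of_coplanarDet_eq_zero {x₁ x₂ x₃ x₄ : V3}
    (h : coplanarDet x₁ x₂ x₃ x₄ = 0) :
    ∃ u : V3, ∃ p : ℝ, u ≠ 0 ∧ ∀ x ∈ ({x₁, x₂, x₃, x₄} : Set V3), pscal u x = p := by
  let xs : Fin 4 → V3 := ![x₁, x₂, x₃, x₄]
  -- row `i` of `M` pairs with `v` to `pscal ![v 0, v 1, v 2] (xs i) - v 3`
  let M : Matrix (Fin 4) (Fin 4) ℝ := Matrix.of fun i => ![xs i 0, -xs i 1, -xs i 2, -1]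
  have hM : M.det = 0 := by
    rw [← h]
    simp [M, xs, Matrix.det_succ_row_zero, Fin.sum_univ_succ, coplanarDet, det3, Fin.succAbove]
    ring
  obtain ⟨v, hv0, hv⟩ := Matrix.exists_mulVec_eq_zero_iff.mpr hM
  set u : V3 := ![v 0, v 1, v 2]
  have hu : ∀ i, pscal u (xs i) = v 3 := fun i => by
    have := congrFun hv i
    simp [M, u, Matrix.mulVec, dotProduct, Fin.sum_univ_four, pscal] at this ⊢
    linarith
  refine ⟨u, v 3, fun hu0 => hv0 ?_, ?_⟩
  · have h3 : v 3 = 0 := by rw [← hu 0, hu0]; simp [pscal]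
    funext i
    fin_cases i
    exacts [congrFun hu0 0, congrFun hu0 1, congrFun hu0 2, h3]
  · rintro x (rfl | rfl | rfl | rfl)
    exacts [hu 0, hu 1, hu 2, hu 3]

/-- The Gram determinant of three unit vectors with pairwise products `p`, `q`, `r`. -/
def gramDet (p q r : ℝ) : ℝ := 1 + 2 * p * q * r - p ^ 2 - q ^ 2 - r ^ 2

lemma gramDet_rotate (p q r : ℝ) : gramDet p q r = gramDet q r p := by
  unfold gramDet; ring

lemma det3_sq_eq_gramDet {x y w : V3} (hx : pscal x x = 1) (hy : pscal y y = 1)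
    (hw : pscal w w = 1) :
    det3 x y w ^ 2 = gramDet (pscal x y) (pscal y w) (pscal w x) := by
  unfold gramDet det3 pscal at *
  linear_combination (((y 0)^2 - (y 1)^2 - (y 2)^2) * ((w 0)^2 - (w 1)^2 - (w 2)^2)
      - (y 0 * w 0 - y 1 * w 1 - y 2 * w 2)^2) * hx
    + (((w 0)^2 - (w 1)^2 - (w 2)^2) - (x 0 * w 0 - x 1 * w 1 - x 2 * w 2)^2) * hy
    + (1 - (x 0 * y 0 - x 1 * y 1 - x 2 * y 2)^2) * hw

lemma one_add_pscal_mul_coplanarDet {z₁ z₂ z₃ z₄ : V3} (h₁ : pscal z₁ z₁ = 1)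
    (h₃ : pscal z₃ z₃ = 1) :
    (1 + pscal z₁ z₃) * coplanarDet z₁ z₂ z₃ z₄
      = (pscal z₁ z₂ + pscal z₂ z₃ - 1 - pscal z₁ z₃) * det3 z₁ z₃ z₄
        + (pscal z₃ z₄ + pscal z₄ z₁ - 1 - pscal z₁ z₃) * det3 z₁ z₂ z₃ := by
  unfold coplanarDet det3 pscal at *
  linear_combination (- (z₂ 0 * (z₃ 1 * z₄ 2 - z₃ 2 * z₄ 1) - z₃ 0 * (z₂ 1 * z₄ 2 - z₂ 2 * z₄ 1)
      + z₄ 0 * (z₂ 1 * z₃ 2 - z₂ 2 * z₃ 1))) * h₁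
    + (- (z₁ 0 * (z₂ 1 * z₄ 2 - z₂ 2 * z₄ 1) - z₂ 0 * (z₁ 1 * z₄ 2 - z₁ 2 * z₄ 1)
      + z₄ 0 * (z₁ 1 * z₂ 2 - z₁ 2 * z₂ 1))) * h₃

def maxTriArea (p q r : ℝ) : ℝ := 2 * arctan (√(gramDet p q r) / (p + q + r + 1))

lemma maxTriArea_rotate (p q r : ℝ) : maxTriArea p q r = maxTriArea q r p := by
  rw [maxTriArea, maxTriArea, gramDet_rotate, add_rotate p]

lemma maxTriArea_pscal {x y w : V3} (hx : x ∈ Hyp) (hy : y ∈ Hyp) (hw : w ∈ Hyp) :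
    maxTriArea (pscal x y) (pscal y w) (pscal w x)
      = 2 * arctan (|det3 x y w| / (pscal x y + pscal y w + pscal w x + 1)) := by
  rw [maxTriArea, ← det3_sq_eq_gramDet hx.1 hy.1 hw.1, Real.sqrt_sq_eq_abs]

lemma triArea_le_maxTriArea {x y w : V3} (hx : x ∈ Hyp) (hy : y ∈ Hyp) (hw : w ∈ Hyp) :
    triArea x y w ≤ maxTriArea (pscal x y) (pscal y w) (pscal w x) := by
  have hD : 0 < pscal x y + pscal y w + pscal w x + 1 := by
    linarith [one_le_pscal hx hy, one_le_pscal hy hw, one_le_pscal hw hx]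
  rw [maxTriArea_pscal hx hy hw, triArea]
  gcongr
  exact le_abs_self _

lemma det3_eq_sqrt_of_maxTriArea_le {x y w : V3} (hx : x ∈ Hyp) (hy : y ∈ Hyp) (hw : w ∈ Hyp)
    (h : maxTriArea (pscal x y) (pscal y w) (pscal w x) ≤ triArea x y w) :
    det3 x y w = √(gramDet (pscal x y) (pscal y w) (pscal w x)) := by
  have hD : 0 < pscal x y + pscal y w + pscal w x + 1 := by
    linarith [one_le_pscal hx hy, one_le_pscal hy hw, one_le_pscal hw hx]
  rw [maxTriArea_pscal hx hy hw, triArea, mul_le_mul_iff_right₀ two_pos,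
    arctan_le_arctan_iff, div_le_div_iff_of_pos_right hD] at h
  rw [← det3_sq_eq_gramDet hx.1 hy.1 hw.1, Real.sqrt_sq_eq_abs]
  exact (le_abs_self _).antisymm h

lemma polyArea_four (z : ℕ → V3) :
    polyArea 4 z = triArea (z 1) (z 2) (z 3) + triArea (z 1) (z 3) (z 4) := by
  simp [polyArea, Finset.sum_Ico_succ_top]

def IsMaximal (n : ℕ) (z : ℕ → V3) : Prop :=
  ∀ w : ℕ → V3, (∀ k ∈ Icc 1 n, w k ∈ Hyp) →
    (∀ k ∈ Icc 1 n, dH (w k) (w (nxt n k)) = dH (z k) (z (nxt n k))) →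
      polyArea n w ≤ polyArea n z

def quadAreaOfDiag (a b c d t : ℝ) : ℝ := maxTriArea a b t + maxTriArea c d t

def admissibleDiag (a b c d : ℝ) : Set ℝ :=
  {t | 1 < t ∧ 0 ≤ gramDet a b t ∧ 0 ≤ gramDet c d t}

/-- A quadrilateral with consecutive products `a, b, c, d`, diagonal product `⟨z₁, z₃⟩ = t`, and
both triangles `z₁ z₂ z₃`, `z₁ z₃ z₄` positively oriented. -/
def quadOfDiag (a b c d t : ℝ) : ℕ → V3
  | 2 => ![a, (t * a - b) / √(t ^ 2 - 1), -√(gramDet a b t) / √(t ^ 2 - 1)]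
  | 3 => ![t, √(t ^ 2 - 1), 0]
  | 4 => ![d, (t * d - c) / √(t ^ 2 - 1), √(gramDet c d t) / √(t ^ 2 - 1)]
  | _ => ![1, 0, 0]

section quadOfDiag

variable {a b c d t : ℝ}

lemma pscal_quadOfDiag (ht : 1 < t) :
    pscal (quadOfDiag a b c d t 1) (quadOfDiag a b c d t 2) = a ∧
    pscal (quadOfDiag a b c d t 2) (quadOfDiag a b c d t 3) = b ∧
    pscal (quadOfDiag a b c d t 3) (quadOfDiag a b c d t 4) = c ∧
    pscal (quadOfDiag a b c d t 4) (quadOfDiag a b c d t 1) = d ∧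
    pscal (quadOfDiag a b c d t 3) (quadOfDiag a b c d t 1) = t := by
  have hs : √(t ^ 2 - 1) ≠ 0 := (Real.sqrt_pos.mpr (by nlinarith)).ne'
  refine ⟨?_, ?_, ?_, ?_, ?_⟩ <;> simp [quadOfDiag, pscal, hs, mul_div_cancel₀]
  ring

lemma quadOfDiag_mem_Hyp (ha : 0 < a) (hd : 0 < d) (ht : t ∈ admissibleDiag a b c d) :
    ∀ k ∈ Icc 1 4, quadOfDiag a b c d t k ∈ Hyp := by
  obtain ⟨ht, hG₁, hG₂⟩ := ht
  have hs := Real.sq_sqrt (show 0 ≤ t ^ 2 - 1 by nlinarith)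
  have hs0 : √(t ^ 2 - 1) ≠ 0 := (Real.sqrt_pos.mpr (by nlinarith)).ne'
  have hq₁ := Real.sq_sqrt hG₁
  have hq₂ := Real.sq_sqrt hG₂
  intro k hk
  fin_cases hk <;> refine ⟨?_, by simp [quadOfDiag] <;> linarith⟩ <;> simp [quadOfDiag, pscal]
  · field_simp
    unfold gramDet at hq₁ ⊢
    linear_combination (a ^ 2 - 1) * hs - hq₁
  · linarith
  · field_simp
    unfold gramDet at hq₂ ⊢
    linear_combination (d ^ 2 - 1) * hs - hq₂

lemma det3_quadOfDiag (ht : 1 < t) :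
    det3 (quadOfDiag a b c d t 1) (quadOfDiag a b c d t 2) (quadOfDiag a b c d t 3)
      = √(gramDet a b t) ∧
    det3 (quadOfDiag a b c d t 1) (quadOfDiag a b c d t 3) (quadOfDiag a b c d t 4)
      = √(gramDet c d t) := by
  have hs : √(t ^ 2 - 1) ≠ 0 := (Real.sqrt_pos.mpr (by nlinarith)).ne'
  constructor <;> simp [quadOfDiag, det3, hs, mul_div_cancel₀]

lemma polyArea_quadOfDiag (ht : 1 < t) :
    polyArea 4 (quadOfDiag a b c d t) = quadAreaOfDiag a b c d t := by
  obtain ⟨h₁₂, h₂₃, h₃₄, h₄₁, h₃₁⟩ := pscal_quadOfDiag (a := a) (b := b) (c := c) (d := d) ht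
  obtain ⟨hA, hB⟩ := det3_quadOfDiag (a := a) (b := b) (c := c) (d := d) ht
  rw [polyArea_four, triArea, triArea, hA, hB, h₁₂, h₂₃, h₃₄, h₄₁, h₃₁,
    pscal_comm _ (quadOfDiag _ _ _ _ _ 3), h₃₁, quadAreaOfDiag, maxTriArea, maxTriArea,
    show t + c + d + 1 = c + d + t + 1 by ring]

end quadOfDiag

lemma quadAreaOfDiag_le_polyArea {z : ℕ → V3} {a b c d t : ℝ} (hmax : IsMaximal 4 z)
    (h₁₂ : pscal (z 1) (z 2) = a) (h₂₃ : pscal (z 2) (z 3) = b) (h₃₄ : pscal (z 3) (z 4) = c)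
    (h₄₁ : pscal (z 4) (z 1) = d) (ha : 0 < a) (hd : 0 < d) (ht : t ∈ admissibleDiag a b c d) :
    quadAreaOfDiag a b c d t ≤ polyArea 4 z := by
  obtain ⟨hw₁₂, hw₂₃, hw₃₄, hw₄₁, -⟩ := pscal_quadOfDiag (a := a) (b := b) (c := c) (d := d) ht.1
  rw [← polyArea_quadOfDiag ht.1]
  refine hmax _ (quadOfDiag_mem_Hyp ha hd ht) fun k hk => congrArg arcoshR ?_
  fin_cases hk
  exacts [hw₁₂.trans h₁₂.symm, hw₂₃.trans h₂₃.symm, hw₃₄.trans h₃₄.symm, hw₄₁.trans h₄₁.symm]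

lemma isMaxOn_quadAreaOfDiag_of_isMaximal {z : ℕ → V3} {a b c d t₀ : ℝ}
    (hz : ∀ k ∈ Icc 1 4, z k ∈ Hyp) (hmax : IsMaximal 4 z)
    (h₁₂ : pscal (z 1) (z 2) = a) (h₂₃ : pscal (z 2) (z 3) = b) (h₃₄ : pscal (z 3) (z 4) = c)
    (h₄₁ : pscal (z 4) (z 1) = d) (h₁₃ : pscal (z 1) (z 3) = t₀) (ha : 0 < a) (hd : 0 < d)
    (ht₀ : 1 < t₀) :
    IsMaxOn (quadAreaOfDiag a b c d) (admissibleDiag a b c d) t₀ ∧ t₀ ∈ admissibleDiag a b c d ∧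
      det3 (z 1) (z 2) (z 3) = √(gramDet a b t₀) ∧ det3 (z 1) (z 3) (z 4) = √(gramDet c d t₀) := by
  have hcomp := fun t => quadAreaOfDiag_le_polyArea (t := t) hmax h₁₂ h₂₃ h₃₄ h₄₁ ha hd
  obtain ⟨hz₁, hz₂, hz₃, hz₄⟩ : z 1 ∈ Hyp ∧ z 2 ∈ Hyp ∧ z 3 ∈ Hyp ∧ z 4 ∈ Hyp :=
    ⟨hz 1 (by decide), hz 2 (by decide), hz 3 (by decide), hz 4 (by decide)⟩
  subst h₁₂ h₂₃ h₃₄ h₄₁ h₁₃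
  have hG₁ := det3_sq_eq_gramDet hz₁.1 hz₂.1 hz₃.1
  have hG₂ := det3_sq_eq_gramDet hz₁.1 hz₃.1 hz₄.1
  have htri₁ := triArea_le_maxTriArea hz₁ hz₂ hz₃
  have htri₂ := triArea_le_maxTriArea hz₁ hz₃ hz₄
  rw [pscal_comm (z 3)] at hG₁ htri₁
  rw [gramDet_rotate] at hG₂
  rw [maxTriArea_rotate] at htri₂
  have ht₀A : pscal (z 1) (z 3) ∈ admissibleDiag _ _ _ _ :=
    ⟨ht₀, hG₁ ▸ sq_nonneg _, hG₂ ▸ sq_nonneg _⟩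
  have hupper : polyArea 4 z ≤ quadAreaOfDiag _ _ _ _ (pscal (z 1) (z 3)) :=
    polyArea_four z ▸ add_le_add htri₁ htri₂
  have heq := (hcomp _ ht₀A).trans_eq (polyArea_four z)
  rw [quadAreaOfDiag] at heq
  refine ⟨fun t ht => (hcomp t ht).trans hupper, ht₀A, ?_, ?_⟩
  · have := det3_eq_sqrt_of_maxTriArea_le hz₁ hz₂ hz₃
    rw [pscal_comm (z 3)] at this
    exact this (by linarith)
  · have := det3_eq_sqrt_of_maxTriArea_le hz₁ hz₃ hz₄
    rw [gramDet_rotate, maxTriArea_rotate] at this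
    exact this (by linarith)

lemma div_one_add_le_arctan {y Y : ℝ} (hy : 0 ≤ y) (hyY : y ≤ Y) : y / (1 + Y) ≤ arctan y :=
  calc y / (1 + Y) ≤ y / √(1 + y ^ 2) :=
        div_le_div_of_nonneg_left hy (by positivity)
          (Real.sqrt_le_iff.mpr ⟨by linarith, by nlinarith⟩)
    _ = sin (arctan y) := (sin_arctan y).symm
    _ ≤ arctan y := sin_le (arctan_nonneg.mpr hy)

lemma eventually_sub_lt_mul_sqrt {ψ : ℝ → ℝ} {ψ' k : ℝ} (hψ : HasDerivAt ψ ψ' 0) (hk : 0 < k) :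
    ∀ᶠ ε in 𝓝[>] 0, ψ 0 - ψ ε < k * √ε := by
  have hO : (fun ε => ψ ε - ψ 0) =O[𝓝[>] 0] (fun ε => ε) := by
    simpa using hψ.isBigO_sub.mono nhdsWithin_le_nhds
  have ho : (fun ε : ℝ => ε) =o[𝓝[>] 0] (fun ε => √ε) := by
    have h1 : (fun ε : ℝ => √ε) =o[𝓝[>] 0] (fun _ => (1 : ℝ)) :=
      (Asymptotics.isLittleO_one_iff ℝ).mpr
        ((Real.continuous_sqrt.tendsto' 0 0 Real.sqrt_zero).mono_left nhdsWithin_le_nhds)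
    refine (h1.mul_isBigO (Asymptotics.isBigO_refl (fun ε => √ε) _)).congr' ?_ ?_
    · filter_upwards [self_mem_nhdsWithin] with ε hε using Real.mul_self_sqrt (le_of_lt hε)
    · simp
  filter_upwards [(hO.trans_isLittleO ho).def (half_pos hk), self_mem_nhdsWithin] with ε hε hε0
  have hs : 0 < √ε := Real.sqrt_pos.mpr hε0
  rw [Real.norm_eq_abs, Real.norm_of_nonneg hs.le] at hε
  nlinarith [neg_abs_le (ψ ε - ψ 0)]

lemma mul_sqrt_le_maxTriArea {a b t T R ε : ℝ} (ha : 0 ≤ a) (hb : 0 ≤ b) (ht : 0 ≤ t)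
    (htT : t ≤ T) (hε : 0 < ε) (hεR : ε ≤ R) (hG : gramDet a b t = ε * (2 * R - ε)) :
    2 * √R / ((1 + R) * (a + b + T + 1)) * √ε ≤ maxTriArea a b t := by
  have hR : 0 < R := hε.trans_le hεR
  have hN_lo : √R * √ε ≤ √(gramDet a b t) := by
    rw [← Real.sqrt_mul hR.le, hG]
    exact Real.sqrt_le_sqrt (by nlinarith)
  have hN_hi : √(gramDet a b t) ≤ R := Real.sqrt_le_iff.mpr ⟨hR.le, by rw [hG]; nlinarith⟩
  have hy_lo : √R * √ε / (a + b + T + 1) ≤ √(gramDet a b t) / (a + b + t + 1) :=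
    div_le_div₀ (Real.sqrt_nonneg _) hN_lo (by positivity) (by linarith)
  have hy_hi : √(gramDet a b t) / (a + b + t + 1) ≤ R :=
    (div_le_self (Real.sqrt_nonneg _) (by linarith)).trans hN_hi
  have := div_one_add_le_arctan (by positivity) hy_hi
  rw [maxTriArea]
  calc 2 * √R / ((1 + R) * (a + b + T + 1)) * √ε
      = 2 * (√R * √ε / (a + b + T + 1) / (1 + R)) := by field_simp
    _ ≤ 2 * (√(gramDet a b t) / (a + b + t + 1) / (1 + R)) := by gcongr
    _ ≤ _ := by linarith

lemma hasDerivAt_gramDet (p q r : ℝ) : HasDerivAt (gramDet p q) (2 * p * q - 2 * r) r := by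
  have e : gramDet p q = fun x => 1 - p ^ 2 - q ^ 2 + (2 * p * q * x - x ^ 2) := by
    funext x; unfold gramDet; ring
  rw [e]
  exact (((hasDerivAt_id' r).const_mul _).sub (hasDerivAt_pow 2 r)).const_add _ |>.congr_deriv
    (by ring)

lemma hasDerivAt_maxTriArea {p q r : ℝ} (hp : 0 ≤ p) (hq : 0 ≤ q) (hr : 0 ≤ r)
    (hG : 0 < gramDet p q r) :
    HasDerivAt (maxTriArea p q) ((p + q - 1 - r) / ((1 + r) * √(gramDet p q r))) r := by
  have hD : p + q + r + 1 ≠ 0 := by positivity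
  have hN := (Real.hasDerivAt_sqrt hG.ne').comp r (hasDerivAt_gramDet p q r)
  refine ((hN.div (((hasDerivAt_id' r).const_add (p + q)).add_const 1) hD).arctan).const_mul 2
    |>.congr_deriv ?_
  have hs := Real.sq_sqrt hG.le
  have hs0 : √(gramDet p q r) ≠ 0 := (Real.sqrt_pos.mpr hG).ne'
  simp only [Pi.div_apply, Function.comp_apply]
  field_simp
  rw [hs]
  unfold gramDet
  ring

lemma eventually_admissibleDiag {a b c d t₀ : ℝ} (ht₀ : 1 < t₀) (hG₁ : 0 < gramDet a b t₀)
    (hG₂ : 0 < gramDet c d t₀) : ∀ᶠ t in 𝓝 t₀, t ∈ admissibleDiag a b c d := by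
  filter_upwards [eventually_gt_nhds ht₀,
    (hasDerivAt_gramDet a b t₀).continuousAt.eventually (eventually_gt_nhds hG₁),
    (hasDerivAt_gramDet c d t₀).continuousAt.eventually (eventually_gt_nhds hG₂)]
    with t ht hG₁ hG₂
  exact ⟨ht, hG₁.le, hG₂.le⟩

lemma mul_sqrt_add_mul_sqrt_eq_zero_of_gramDet_pos {a b c d t₀ : ℝ} (ha : 0 ≤ a) (hb : 0 ≤ b)
    (hc : 0 ≤ c) (hd : 0 ≤ d) (ht₀ : 1 < t₀) (hG₁ : 0 < gramDet a b t₀) (hG₂ : 0 < gramDet c d t₀)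
    (hmax : IsMaxOn (quadAreaOfDiag a b c d) (admissibleDiag a b c d) t₀) :
    (a + b - 1 - t₀) * √(gramDet c d t₀) + (c + d - 1 - t₀) * √(gramDet a b t₀) = 0 := by
  have hderiv := (hmax.isLocalMax (eventually_admissibleDiag ht₀ hG₁ hG₂)).hasDerivAt_eq_zero
    ((hasDerivAt_maxTriArea ha hb (by linarith) hG₁).add
      (hasDerivAt_maxTriArea hc hd (by linarith) hG₂))
  have h₁ := (Real.sqrt_pos.mpr hG₁).ne'
  have h₂ := (Real.sqrt_pos.mpr hG₂).ne'
  have : 1 + t₀ ≠ 0 := by linarith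
  field_simp at hderiv
  linear_combination hderiv

lemma gramDet_eq_sub_sq (a b t : ℝ) :
    gramDet a b t = (a ^ 2 - 1) * (b ^ 2 - 1) - (t - a * b) ^ 2 := by
  unfold gramDet; ring

lemma exists_gramDet_sub_mul_eq {a b t₀ : ℝ} (ha : 1 < a) (hb : 1 < b)
    (hG : gramDet a b t₀ = 0) :
    ∃ R σ : ℝ, 0 < R ∧ |σ| = 1 ∧ ∀ ε, gramDet a b (t₀ - σ * ε) = ε * (2 * R - ε) := by
  have hab : 0 < (a ^ 2 - 1) * (b ^ 2 - 1) := mul_pos (by nlinarith) (by nlinarith)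
  set R := √((a ^ 2 - 1) * (b ^ 2 - 1))
  have hR2 : R ^ 2 = (a ^ 2 - 1) * (b ^ 2 - 1) := Real.sq_sqrt hab.le
  have hR : 0 < R := Real.sqrt_pos.mpr hab
  set σ := (t₀ - a * b) / R
  have hσR : σ * R = t₀ - a * b := div_mul_cancel₀ _ hR.ne'
  have hσ : |σ| = 1 := by
    have : |t₀ - a * b| = R := by
      rw [← Real.sqrt_sq_eq_abs, Real.sqrt_eq_iff_mul_self_eq_of_pos hR]
      linear_combination hR2 - gramDet_eq_sub_sq a b t₀ + hG
    rw [abs_div, this, abs_of_pos hR, div_self hR.ne']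
  refine ⟨R, σ, hR, hσ, fun ε => ?_⟩
  have : σ ^ 2 = 1 := by rw [← sq_abs, hσ, one_pow]
  rw [gramDet_eq_sub_sq, ← hR2, show t₀ - σ * ε - a * b = σ * (R - ε) by linear_combination -hσR]
  linear_combination -(R - ε) ^ 2 * this

lemma not_isMaxOn_of_gramDet_eq_zero {a b c d t₀ : ℝ} (ha : 1 < a) (hb : 1 < b) (hc : 0 ≤ c)
    (hd : 0 ≤ d) (ht₀ : 1 < t₀) (hG₁ : gramDet a b t₀ = 0) (hG₂ : 0 < gramDet c d t₀) :
    ¬ IsMaxOn (quadAreaOfDiag a b c d) (admissibleDiag a b c d) t₀ := by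
  intro hmax
  obtain ⟨R, σ, hR, hσ, hτ_gram⟩ := exists_gramDet_sub_mul_eq ha hb hG₁
  let τ : ℝ → ℝ := fun ε => t₀ - σ * ε
  have hτ_deriv : HasDerivAt τ (-σ) 0 := by
    simpa using ((hasDerivAt_id' (0 : ℝ)).const_mul σ).const_sub t₀
  have hτ0 : τ 0 = t₀ := by simp [τ]
  have hψ := (hasDerivAt_maxTriArea hc hd (by linarith) hG₂).comp_of_eq 0 hτ_deriv hτ0.symm
  have h_near : ∀ᶠ ε in 𝓝[>] 0, (1 < τ ε ∧ 0 < gramDet c d (τ ε)) ∧ ε ≤ min R 1 :=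
    ((hτ0 ▸ hτ_deriv.continuousAt.tendsto.mono_left nhdsWithin_le_nhds).eventually
      ((eventually_gt_nhds ht₀).and
        ((hasDerivAt_gramDet c d t₀).continuousAt.eventually (eventually_gt_nhds hG₂)))).and
      ((eventually_le_nhds (lt_min hR one_pos)).filter_mono nhdsWithin_le_nhds)
  -- moving the diagonal by `ε` opens the first triangle like `√ε` but changes the second by `O(ε)`
  have hk : 0 < 2 * √R / ((1 + R) * (a + b + (t₀ + 1) + 1)) := by positivity
  obtain ⟨ε, ⟨⟨hτ1, hτG₂⟩, hεR⟩, hψε, hε : 0 < ε⟩ :=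
    (h_near.and ((eventually_sub_lt_mul_sqrt hψ hk).and self_mem_nhdsWithin)).exists
  have hεR' := le_min_iff.mp hεR
  have hτT : τ ε ≤ t₀ + 1 := by
    have : -ε ≤ σ * ε := by
      have := neg_abs_le (σ * ε)
      rwa [abs_mul, hσ, one_mul, abs_of_pos hε] at this
    linarith [hεR'.2]
  have hφ := mul_sqrt_le_maxTriArea (by linarith) (by linarith) (by linarith) hτT hε hεR'.1
    (hτ_gram ε)
  have hmax_ε : quadAreaOfDiag a b c d (τ ε) ≤ quadAreaOfDiag a b c d t₀ :=
    hmax ⟨hτ1, by rw [hτ_gram]; nlinarith, hτG₂.le⟩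
  have h₀ : maxTriArea a b t₀ = 0 := by
    rw [maxTriArea, hG₁, Real.sqrt_zero, zero_div, arctan_zero, mul_zero]
  simp only [quadAreaOfDiag, h₀, Function.comp_apply, hτ0] at hmax_ε hψε
  linarith

lemma mul_sqrt_add_mul_sqrt_eq_zero_of_isMaxOn {a b c d t₀ : ℝ} (ha : 1 < a) (hb : 1 < b)
    (hc : 1 < c) (hd : 1 < d) (ht₀ : t₀ ∈ admissibleDiag a b c d)
    (hmax : IsMaxOn (quadAreaOfDiag a b c d) (admissibleDiag a b c d) t₀) :
    (a + b - 1 - t₀) * √(gramDet c d t₀) + (c + d - 1 - t₀) * √(gramDet a b t₀) = 0 := by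
  obtain ⟨ht₀, hG₁, hG₂⟩ := ht₀
  rcases hG₁.eq_or_lt with hG₁ | hG₁ <;> rcases hG₂.eq_or_lt with hG₂ | hG₂
  · simp [← hG₁, ← hG₂]
  · exact absurd hmax (not_isMaxOn_of_gramDet_eq_zero ha hb (by linarith) (by linarith) ht₀
      hG₁.symm hG₂)
  · refine absurd (fun t ht => ?_) (not_isMaxOn_of_gramDet_eq_zero hc hd (by linarith)
      (by linarith) ht₀ hG₂.symm hG₁)
    have : quadAreaOfDiag a b c d t ≤ quadAreaOfDiag a b c d t₀ := hmax ⟨ht.1, ht.2.2, ht.2.1⟩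
    show quadAreaOfDiag c d a b t ≤ quadAreaOfDiag c d a b t₀
    rw [quadAreaOfDiag, quadAreaOfDiag] at *
    linarith
  · exact mul_sqrt_add_mul_sqrt_eq_zero_of_gramDet_pos (by linarith) (by linarith) (by linarith)
      (by linarith) ht₀ hG₁ hG₂ hmax

/-- Lemma 4.5: a maximal 4-gon is cocyclic or collinear. -/
theorem maximal_quadrilateral_cocyclic_or_collinear (z : ℕ → V3)
    (hz : ∀ k ∈ Finset.Icc 1 4, z k ∈ Hyp)
    (hpos : ∀ k ∈ Finset.Icc 1 4, 0 < dH (z k) (z (nxt 4 k)))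
    (hmax : ∀ w : ℕ → V3, (∀ k ∈ Finset.Icc 1 4, w k ∈ Hyp) →
      (∀ k ∈ Finset.Icc 1 4, dH (w k) (w (nxt 4 k)) = dH (z k) (z (nxt 4 k))) →
      polyArea 4 w ≤ polyArea 4 z) :
    Cocyc {z 1, z 2, z 3, z 4} ∨ Collin {z 1, z 2, z 3, z 4} := by
  obtain ⟨hz₁, hz₂, hz₃, hz₄⟩ : z 1 ∈ Hyp ∧ z 2 ∈ Hyp ∧ z 3 ∈ Hyp ∧ z 4 ∈ Hyp :=
    ⟨hz 1 (by decide), hz 2 (by decide), hz 3 (by decide), hz 4 (by decide)⟩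
  have ha := one_lt_pscal_of_dH_pos hz₁ hz₂ (hpos 1 (by decide))
  have hb := one_lt_pscal_of_dH_pos hz₂ hz₃ (hpos 2 (by decide))
  have hc := one_lt_pscal_of_dH_pos hz₃ hz₄ (hpos 3 (by decide))
  have hd := one_lt_pscal_of_dH_pos hz₄ hz₁ (hpos 4 (by decide))
  suffices coplanarDet (z 1) (z 2) (z 3) (z 4) = 0 by
    obtain ⟨u, p, hu, hup⟩ := exists_pscal_eq_of_coplanarDet_eq_zero this
    exact cocyc_or_collin_of_pscal_eq hu hup
  rcases (one_le_pscal hz₁ hz₃).eq_or_lt with h₁₃ | ht₀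
  · rw [eq_of_pscal_eq_one hz₁ hz₃ h₁₃.symm]
    simp only [coplanarDet, det3]
    ring
  obtain ⟨hmaxOn, ht₀A, hdet₁, hdet₂⟩ := isMaxOn_quadAreaOfDiag_of_isMaximal hz hmax rfl rfl rfl
    rfl rfl (by linarith) (by linarith) ht₀
  have hkey := one_add_pscal_mul_coplanarDet (z₂ := z 2) (z₄ := z 4) hz₁.1 hz₃.1
  rw [hdet₁, hdet₂, mul_sqrt_add_mul_sqrt_eq_zero_of_isMaxOn ha hb hc hd ht₀A hmaxOn] at hkey
  exact (mul_eq_zero.mp hkey).resolve_left (by linarith)
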